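/- (Proposition 1: subspace-based relative TO estimation.) Let K, L be positive integers, A ∈ ℂ^{K×L} with A†A invertible, and h ∈ ℂ^K. For Δτ ∈ ℝ define F(Δτ) = Re( h† · diag(a(Δτ)) · P_n(A) · diag(a(Δτ))† · h ), and for b ∈ ℂ^L and s > 0 define the Gaussian log-likelihood L(Δτ, b, s) = −K·log π − K·log s − (1/s)·‖h − diag(a(Δτ))·A·b‖². If F(Δτ) > 0, then sup over b ∈ ℂ^L and s > 0 of L(Δτ, b, s) equals −K·log(π·e) − K·log(F(Δτ)/K). Consequently, for any Δτ₁, Δτ₂ with F(Δτ₁) > 0 and F(Δτ₂) > 0, the profiled likelihood at Δτ₁ is at least that at Δτ₂ if and only if F(Δτ₁) ≤ F(Δτ₂); i.e., maximum-likelihood estimation of the relative time offset is equivalent to minimizing the quadratic form F. -/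

import Mathlib

open Matrix

noncomputable section

/-- Steering vector of delay `τ`: entries `exp(−2πi·k·Δf·τ)`, k = 0,…,K−1. -/
def steer (K : ℕ) (Δf τ : ℝ) : Fin K → ℂ :=
  fun k => Complex.exp (-(2 * (Real.pi : ℂ) * Complex.I * ((k : ℕ) : ℂ) * (Δf : ℂ) * (τ : ℂ)))

/-- Noise-subspace projection matrix `Pₙ(A) = I − A(A†A)⁻¹A†`. -/
def Pn {K L : ℕ} (A : Matrix (Fin K) (Fin L) ℂ) : Matrix (Fin K) (Fin K) ℂ :=
  1 - A * (Aᴴ * A)⁻¹ * Aᴴ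

/-- Quadratic objective `F(Δτ) = Re(h† · diag(a(Δτ)) · Pₙ(A) · diag(a(Δτ))† · h)`. -/
def Fobj (K : ℕ) (Δf : ℝ) {L : ℕ} (A : Matrix (Fin K) (Fin L) ℂ) (h : Fin K → ℂ)
    (Δτ : ℝ) : ℝ :=
  (star h ⬝ᵥ ((Matrix.diagonal (steer K Δf Δτ) * Pn A *
      (Matrix.diagonal (steer K Δf Δτ))ᴴ) *ᵥ h)).re

/-- Gaussian log-likelihood
`L(Δτ, b, s) = −K·log π − K·log s − (1/s)·‖h − diag(a(Δτ))·A·b‖²`. -/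
def loglik (K : ℕ) (Δf : ℝ) {L : ℕ} (A : Matrix (Fin K) (Fin L) ℂ) (h : Fin K → ℂ)
    (Δτ : ℝ) (b : Fin L → ℂ) (s : ℝ) : ℝ :=
  -(K : ℝ) * Real.log Real.pi - (K : ℝ) * Real.log s -
    (1 / s) * ‖(WithLp.equiv 2 (Fin K → ℂ)).symm
        (h - (Matrix.diagonal (steer K Δf Δτ)) *ᵥ (A *ᵥ b))‖ ^ 2

/-!
Write `D = diag(a(Δτ))`, which is unitary, and `g = D† h`. Then `‖h − D A b‖ = ‖g − A b‖`, and
`g − A b = Pₙ(A) g + A (b̂ − b)` with `b̂ = (A†A)⁻¹ A† g` and the two summands orthogonal, so by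
Pythagoras `‖h − D A b‖² = F(Δτ) + ‖A (b̂ − b)‖²`: the residual is minimised at `b = b̂`, with
value `F(Δτ)`. What remains is `max_{s>0} (−K log s − F/s) = −K − K log (F/K)`, attained at
`s = F/K`, which is `log x ≤ x − 1` at `x = F/(K s)`. The comparison of two profiled
likelihoods is monotonicity of `log`.
-/

section Unitary

variable {n 𝕜 : Type*} [Fintype n] [DecidableEq n] [RCLike 𝕜]

theorem diagonal_mem_unitaryGroup {v : n → 𝕜} (hv : ∀ i, ‖v i‖ = 1) :
    diagonal v ∈ unitaryGroup n 𝕜 := by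
  rw [mem_unitaryGroup_iff, star_eq_conjTranspose, diagonal_conjTranspose,
    diagonal_mul_diagonal, ← diagonal_one]
  congr 1
  funext i
  rw [Pi.star_apply, RCLike.star_def, RCLike.mul_conj, hv i]
  simp

theorem norm_toLp_unitary_mulVec {U : Matrix n n 𝕜} (hU : U ∈ unitaryGroup n 𝕜) (v : n → 𝕜) :
    ‖WithLp.toLp 2 (U *ᵥ v)‖ = ‖WithLp.toLp 2 v‖ := by
  rw [← sq_eq_sq₀ (norm_nonneg _) (norm_nonneg _), @norm_sq_eq_re_inner 𝕜,
    @norm_sq_eq_re_inner 𝕜, EuclideanSpace.inner_eq_star_dotProduct,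
    EuclideanSpace.inner_eq_star_dotProduct, star_mulVec, dotProduct_comm, dotProduct_mulVec,
    vecMul_vecMul, ← star_eq_conjTranspose, mem_unitaryGroup_iff'.mp hU, vecMul_one,
    dotProduct_comm]

end Unitary

theorem norm_sq_toLp_eq_re_star_dotProduct {n : Type*} [Fintype n] (v : n → ℂ) :
    ‖WithLp.toLp 2 v‖ ^ 2 = (star v ⬝ᵥ v).re := by
  rw [@norm_sq_eq_re_inner ℂ, EuclideanSpace.inner_eq_star_dotProduct, WithLp.ofLp_toLp,
    dotProduct_comm]
  rfl

theorem re_dotProduct_mul_mul_conjTranspose_mulVec {m n : Type*} [Fintype m] [Fintype n]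
    {P : Matrix n n ℂ} (hPh : P.IsHermitian) (hPi : IsIdempotentElem P)
    (M : Matrix m n ℂ) (h : m → ℂ) :
    (star h ⬝ᵥ (M * P * Mᴴ) *ᵥ h).re = ‖WithLp.toLp 2 (P *ᵥ (Mᴴ *ᵥ h))‖ ^ 2 := by
  simp only [norm_sq_toLp_eq_re_star_dotProduct, star_mulVec, hPh.eq, conjTranspose_conjTranspose,
    dotProduct_mulVec, vecMul_vecMul, Matrix.mul_assoc]
  rw [← Matrix.mul_assoc P P, hPi.eq]

theorem norm_steer (K : ℕ) (Δf τ : ℝ) (k : Fin K) : ‖steer K Δf τ k‖ = 1 := by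
  have : steer K Δf τ k = Complex.exp (↑(-(2 * Real.pi * (k : ℝ) * Δf * τ)) * Complex.I) := by
    rw [steer]; push_cast; ring_nf
  rw [this, Complex.norm_exp_ofReal_mul_I]

section Projection

variable {K L : ℕ} {A : Matrix (Fin K) (Fin L) ℂ}

def leastSquares (A : Matrix (Fin K) (Fin L) ℂ) (g : Fin K → ℂ) : Fin L → ℂ :=
  ((Aᴴ * A)⁻¹ * Aᴴ) *ᵥ g

theorem Pn_isHermitian (A : Matrix (Fin K) (Fin L) ℂ) : (Pn A).IsHermitian := by
  simp [Pn, IsHermitian, conjTranspose_sub, conjTranspose_mul, conjTranspose_nonsing_inv,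
    Matrix.mul_assoc]

theorem Pn_mul_eq_zero (hA : IsUnit (Aᴴ * A)) : Pn A * A = 0 := by
  rw [Pn, Matrix.sub_mul, Matrix.one_mul, Matrix.mul_assoc, Matrix.mul_assoc,
    nonsing_inv_mul _ ((isUnit_iff_isUnit_det _).mp hA), Matrix.mul_one, sub_self]

theorem Pn_isIdempotentElem (hA : IsUnit (Aᴴ * A)) : IsIdempotentElem (Pn A) := by
  rw [IsIdempotentElem]
  nth_rewrite 2 [Pn]
  rw [Matrix.mul_sub, Matrix.mul_one, Matrix.mul_assoc A,
    ← Matrix.mul_assoc (Pn A) A, Pn_mul_eq_zero hA, Matrix.zero_mul, sub_zero]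

theorem norm_sq_toLp_sub_mulVec (hA : IsUnit (Aᴴ * A)) (g : Fin K → ℂ) (b : Fin L → ℂ) :
    ‖WithLp.toLp 2 (g - A *ᵥ b)‖ ^ 2 =
      ‖WithLp.toLp 2 (Pn A *ᵥ g)‖ ^ 2 +
        ‖WithLp.toLp 2 (A *ᵥ (leastSquares A g - b))‖ ^ 2 := by
  have hsplit : g - A *ᵥ b = Pn A *ᵥ g + A *ᵥ (leastSquares A g - b) := by
    simp only [Pn, leastSquares, sub_mulVec, one_mulVec, mulVec_sub, mulVec_mulVec,
      Matrix.mul_assoc]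
    abel
  have horth : inner ℂ (WithLp.toLp 2 (Pn A *ᵥ g))
      (WithLp.toLp 2 (A *ᵥ (leastSquares A g - b))) = 0 := by
    rw [EuclideanSpace.inner_eq_star_dotProduct, WithLp.ofLp_toLp, WithLp.ofLp_toLp, star_mulVec,
      (Pn_isHermitian A).eq, dotProduct_comm, ← dotProduct_mulVec, mulVec_mulVec,
      Pn_mul_eq_zero hA, zero_mulVec, dotProduct_zero]
  rw [hsplit, WithLp.toLp_add, sq, sq, sq]
  exact norm_add_sq_eq_norm_sq_add_norm_sq_of_inner_eq_zero _ _ horth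

end Projection

section Likelihood

variable {K L : ℕ} {Δf : ℝ} {A : Matrix (Fin K) (Fin L) ℂ} {h : Fin K → ℂ}

theorem diagonal_steer_mem_unitaryGroup (K : ℕ) (Δf τ : ℝ) :
    diagonal (steer K Δf τ) ∈ unitaryGroup (Fin K) ℂ :=
  diagonal_mem_unitaryGroup (norm_steer K Δf τ)

theorem norm_sq_residual (hA : IsUnit (Aᴴ * A)) (τ : ℝ) (b : Fin L → ℂ) :
    ‖WithLp.toLp 2 (h - diagonal (steer K Δf τ) *ᵥ (A *ᵥ b))‖ ^ 2 =
      Fobj K Δf A h τ + ‖WithLp.toLp 2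
        (A *ᵥ (leastSquares A ((diagonal (steer K Δf τ))ᴴ *ᵥ h) - b))‖ ^ 2 := by
  set D := diagonal (steer K Δf τ)
  have hD : D ∈ unitaryGroup (Fin K) ℂ := diagonal_steer_mem_unitaryGroup K Δf τ
  have hfactor : h - D *ᵥ (A *ᵥ b) = D *ᵥ (Dᴴ *ᵥ h - A *ᵥ b) := by
    rw [mulVec_sub, mulVec_mulVec h, ← star_eq_conjTranspose, mem_unitaryGroup_iff.mp hD,
      one_mulVec]
  rw [hfactor, norm_toLp_unitary_mulVec hD, norm_sq_toLp_sub_mulVec hA, Fobj,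
    re_dotProduct_mul_mul_conjTranspose_mulVec (Pn_isHermitian A) (Pn_isIdempotentElem hA)]

theorem loglik_le (hA : IsUnit (Aᴴ * A)) (τ : ℝ) (b : Fin L → ℂ) {s : ℝ} (hs : 0 < s) :
    loglik K Δf A h τ b s ≤
      -K * Real.log Real.pi - K * Real.log s - Fobj K Δf A h τ / s := by
  rw [loglik, WithLp.equiv_symm_apply, norm_sq_residual hA, one_div_mul_eq_div]
  gcongr
  exact le_add_of_nonneg_right (sq_nonneg _)

theorem loglik_leastSquares (hA : IsUnit (Aᴴ * A)) (τ s : ℝ) :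
    loglik K Δf A h τ (leastSquares A ((diagonal (steer K Δf τ))ᴴ *ᵥ h)) s =
      -K * Real.log Real.pi - K * Real.log s - Fobj K Δf A h τ / s := by
  rw [loglik, WithLp.equiv_symm_apply, norm_sq_residual hA, sub_self, mulVec_zero,
    WithLp.toLp_zero, norm_zero]
  ring

end Likelihood

theorem neg_mul_log_sub_div_le {k m s : ℝ} (hk : 0 < k) (hm : 0 < m) (hs : 0 < s) :
    -k * Real.log s - m / s ≤ -k - k * Real.log (m / k) := by
  have hlog := Real.log_le_sub_one_of_pos (show 0 < m / (k * s) by positivity)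
  rw [div_mul_eq_div_div, Real.log_div (by positivity) hs.ne'] at hlog
  have hmks : k * (m / k / s) = m / s := by field_simp
  linarith [mul_le_mul_of_nonneg_left hlog hk.le]

theorem subspace_relative_TO_mle_general
    (K L : ℕ) (hK : 0 < K) (Δf : ℝ)
    (A : Matrix (Fin K) (Fin L) ℂ) (hA : IsUnit (Aᴴ * A)) (h : Fin K → ℂ) :
    (∀ Δτ : ℝ, 0 < Fobj K Δf A h Δτ →
      IsLUB {y : ℝ | ∃ b : Fin L → ℂ, ∃ s : ℝ, 0 < s ∧ y = loglik K Δf A h Δτ b s}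
        (-(K : ℝ) * Real.log (Real.pi * Real.exp 1) -
          (K : ℝ) * Real.log (Fobj K Δf A h Δτ / K))) ∧
    (∀ Δτ₁ Δτ₂ : ℝ, 0 < Fobj K Δf A h Δτ₁ → 0 < Fobj K Δf A h Δτ₂ →
      ((-(K : ℝ) * Real.log (Real.pi * Real.exp 1) -
          (K : ℝ) * Real.log (Fobj K Δf A h Δτ₁ / K)) ≥
        (-(K : ℝ) * Real.log (Real.pi * Real.exp 1) -
          (K : ℝ) * Real.log (Fobj K Δf A h Δτ₂ / K)) ↔
        Fobj K Δf A h Δτ₁ ≤ Fobj K Δf A h Δτ₂)) := by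
  have hK' : (0 : ℝ) < K := Nat.cast_pos.mpr hK
  have hlog : Real.log (Real.pi * Real.exp 1) = Real.log Real.pi + 1 := by
    rw [Real.log_mul Real.pi_ne_zero (Real.exp_ne_zero 1), Real.log_exp]
  refine ⟨fun Δτ hF => ?_, fun Δτ₁ Δτ₂ hF₁ hF₂ => ?_⟩
  · refine IsGreatest.isLUB ⟨⟨leastSquares A ((diagonal (steer K Δf Δτ))ᴴ *ᵥ h),
      Fobj K Δf A h Δτ / K, div_pos hF hK', ?_⟩, ?_⟩
    · rw [loglik_leastSquares hA, div_div_cancel₀ hF.ne', hlog]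
      ring
    · rintro _ ⟨b, s, hs, rfl⟩
      grw [loglik_le hA Δτ b hs, hlog]
      linarith [neg_mul_log_sub_div_le hK' hF hs]
  · rw [ge_iff_le, sub_le_sub_iff_left, mul_le_mul_iff_right₀ hK',
      Real.log_le_log_iff (div_pos hF₁ hK') (div_pos hF₂ hK'), div_le_div_iff_of_pos_right hK']

/-- Proposition 1, subspace-based relative TO estimation: if `F(Δτ) > 0` then the
supremum of the log-likelihood over the nuisance parameters `b` and `s > 0` equals
`−K·log(π·e) − K·log(F(Δτ)/K)`; consequently, maximizing the profiled likelihood is equivalent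
to minimizing `F`. -/
theorem subspace_relative_TO_mle
    (K L : ℕ) (hK : 0 < K) (hL : 0 < L) (Δf : ℝ) (hΔf : 0 < Δf)
    (A : Matrix (Fin K) (Fin L) ℂ) (hA : IsUnit (Aᴴ * A)) (h : Fin K → ℂ) :
    (∀ Δτ : ℝ, 0 < Fobj K Δf A h Δτ →
      IsLUB {y : ℝ | ∃ b : Fin L → ℂ, ∃ s : ℝ, 0 < s ∧ y = loglik K Δf A h Δτ b s}
        (-(K : ℝ) * Real.log (Real.pi * Real.exp 1) -
          (K : ℝ) * Real.log (Fobj K Δf A h Δτ / K))) ∧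
    (∀ Δτ₁ Δτ₂ : ℝ, 0 < Fobj K Δf A h Δτ₁ → 0 < Fobj K Δf A h Δτ₂ →
      ((-(K : ℝ) * Real.log (Real.pi * Real.exp 1) -
          (K : ℝ) * Real.log (Fobj K Δf A h Δτ₁ / K)) ≥
        (-(K : ℝ) * Real.log (Real.pi * Real.exp 1) -
          (K : ℝ) * Real.log (Fobj K Δf A h Δτ₂ / K)) ↔
        Fobj K Δf A h Δτ₁ ≤ Fobj K Δf A h Δτ₂)) :=
  subspace_relative_TO_mle_general K L hK Δf A hA h
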